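/- Let M be a 3-dimensional (ε)-para Sasakian manifold. Then the Ricci operator satisfies QX = (r/2 + ε)X − (r/2 + 3ε)η(X)ξ, where r is the scalar curvature. -/
import Mathlib


/-- In a 3-dimensional (ε)-para Sasakian manifold, the Ricci operator satisfies
`QX = (r/2 + ε)X − (r/2 + 3ε)η(X)ξ`. -/
theorem stmt_3 {V : Type*} [AddCommGroup V] [Module ℝ V]
    (g : V →ₗ[ℝ] V →ₗ[ℝ] ℝ) (ξ : V) (η : V →ₗ[ℝ] ℝ) (ε : ℝ)
    (R : V → V → V → V) (Q : V →ₗ[ℝ] V) (S : V → V → ℝ) (r : ℝ)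
    (hε : ε * ε = 1)
    (hηξ : η ξ = 1)
    (hmetric : ∀ X, g X ξ = ε * η X)
    (hSQ : ∀ X Y, S X Y = g (Q X) Y)
    -- 3-dimensional: the conformal curvature tensor vanishes
    (hR3 : ∀ X Y Z, R X Y Z =
      g Y Z • Q X - g X Z • Q Y + S Y Z • X - S X Z • Y
        - (r / 2) • (g Y Z • X - g X Z • Y))
    (hRξ : ∀ X Y, R X Y ξ = η X • Y - η Y • X)
    (hSξ : ∀ X, S X ξ = -2 * η X)
    (hQξ : Q ξ = (-(2 * ε)) • ξ) :
    ∀ X, Q X = (r / 2 + ε) • X - ((r / 2 + 3 * ε) * η X) • ξ := by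
  intro X
  have h := (hR3 X ξ ξ).symm.trans (hRξ X ξ)
  rw [hmetric, hmetric, hSξ, hSξ, hQξ, hηξ] at h
  rcases mul_self_eq_one_iff.mp hε with h1 | h1 <;> subst h1
  · linear_combination (norm := module) h
  · linear_combination (norm := module) -h
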